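/- Let m = (m(p))_{p≥0} be a sequence of positive reals, and k, p ∈ ℕ with 1 ≤ k < p. Given f̂(t,z) ∈ ℂ[[t,z]], a(z) ∈ ℂ[[z]] with a(0) ≠ 0, and initial data φ_0,…,φ_{k-1} ∈ ℂ[[z]], there exists a unique formal power series û(t,z) ∈ ℂ[[t,z]] satisfying (∂_{m_1,t}^k − a(z) ∂_{m_2,z}^p) û(t,z) = f̂(t,z) and ∂_{m_1,t}^j û(0,z) = φ_j(z) for j = 0,…,k-1, where m_1, m_2 are two sequences of positive reals. -/

import Mathlib

/-- Moment derivative in `t` on two-variable formal power series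
`u = Σ_{i,j} (u i j) t^i z^j`, acting on the `t`-index. -/
noncomputable def momentDt (m : ℕ → ℝ) (u : ℕ → ℕ → ℂ) : ℕ → ℕ → ℂ :=
  fun i j => ((m (i + 1) : ℝ) / (m i : ℝ) : ℂ) * u (i + 1) j

/-- Moment derivative in `z`, acting on the `z`-index. -/
noncomputable def momentDz (m : ℕ → ℝ) (u : ℕ → ℕ → ℂ) : ℕ → ℕ → ℂ :=
  fun i j => ((m (j + 1) : ℝ) / (m j : ℝ) : ℂ) * u i (j + 1)

/-- Multiplication by a one-variable series `a(z)` (Cauchy product in the `z`-index). -/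
noncomputable def mulZ (a : ℕ → ℂ) (u : ℕ → ℕ → ℂ) : ℕ → ℕ → ℂ :=
  fun i j => ∑ l ∈ Finset.range (j + 1), a l * u i (j - l)

/-!
Since `∂_{m₂,z}` and `a(z)` do not mix the `t`-coefficients, the `t^i`-coefficient of the
equation reads `(m₁(i+k)/m₁(i)) û_{i+k} = f_i + a · ∂_{m₂,z}^p û_i`, a recursion with lag `k`
in the `t`-index whose first `k` terms are fixed by the initial data.
-/

section LagRecurrence

variable {X : Type*} {k : ℕ}

def lagRec (hk : 0 < k) (ψ : ℕ → X) (G : ℕ → X → X) : ℕ → X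
  | i => if i < k then ψ i else G (i - k) (lagRec hk ψ G (i - k))
  decreasing_by omega

theorem existsUnique_lagRec (hk : 0 < k) (ψ : ℕ → X) (G : ℕ → X → X) :
    ∃! u : ℕ → X, (∀ i, u (i + k) = G i (u i)) ∧ ∀ i < k, u i = ψ i := by
  refine ⟨lagRec hk ψ G, ⟨fun i => ?_, fun i hi => ?_⟩, ?_⟩
  · rw [lagRec, if_neg (by omega), Nat.add_sub_cancel]
  · rw [lagRec, if_pos hi]
  · rintro v ⟨hv_step, hv_init⟩
    funext i
    induction i using Nat.strong_induction_on with
    | _ i ih =>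
      rw [lagRec]
      split_ifs with hi
      · exact hv_init i hi
      · obtain ⟨j, rfl⟩ := Nat.exists_eq_add_of_le' (not_lt.mp hi)
        rw [hv_step, Nat.add_sub_cancel, ih j (by omega)]

end LagRecurrence

section MomentDerivative

noncomputable def momentD (m : ℕ → ℝ) (w : ℕ → ℂ) : ℕ → ℂ :=
  fun j => ((m (j + 1) : ℝ) / (m j : ℝ) : ℂ) * w (j + 1)

theorem momentD_iterate_apply (m : ℕ → ℝ) (hm : ∀ i, m i ≠ 0) (n : ℕ) (w : ℕ → ℂ) (i : ℕ) :
    (momentD m)^[n] w i = (m (i + n) / m i : ℂ) * w (i + n) := by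
  induction n generalizing i with
  | zero => simp [hm i]
  | succ n ih =>
    have hi : (m (i + 1) : ℂ) ≠ 0 := Complex.ofReal_ne_zero.mpr (hm (i + 1))
    rw [Function.iterate_succ_apply', momentD, ih, ← add_assoc, add_right_comm, ← mul_assoc,
      div_mul_div_cancel₀' hi]

theorem momentDt_iterate_apply (m : ℕ → ℝ) (hm : ∀ i, m i ≠ 0) (n : ℕ) (u : ℕ → ℕ → ℂ)
    (i j : ℕ) : (momentDt m)^[n] u i j = (m (i + n) / m i : ℂ) * u (i + n) j := by
  have hcol : Function.Semiconj (fun v : ℕ → ℕ → ℂ => fun i => v i j) (momentDt m) (momentD m) :=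
    fun _ => rfl
  rw [← momentD_iterate_apply m hm n (fun i => u i j)]
  exact congrFun ((hcol.iterate_right n) u) i

theorem momentDz_iterate_apply (m : ℕ → ℝ) (n : ℕ) (u : ℕ → ℕ → ℂ) (i : ℕ) :
    (momentDz m)^[n] u i = (momentD m)^[n] (u i) :=
  (Function.Semiconj.iterate_right (f := fun v : ℕ → ℕ → ℂ => v i) (fun _ => rfl) n) u

end MomentDerivative

theorem exists_unique_formal_solution_Cauchy_general
    (m₁ m₂ : ℕ → ℝ) (h₁ : ∀ p, 0 < m₁ p)
    (a : ℕ → ℂ)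
    (k p : ℕ) (hk : 1 ≤ k)
    (f : ℕ → ℕ → ℂ) (φ : ℕ → ℕ → ℂ) :
    ∃! u : ℕ → ℕ → ℂ,
      (∀ i j, ((momentDt m₁)^[k] u) i j - mulZ a ((momentDz m₂)^[p] u) i j = f i j) ∧
      (∀ j, j < k → ∀ n, ((momentDt m₁)^[j] u) 0 n = φ j n) := by
  have hm₁ : ∀ i, m₁ i ≠ 0 := fun i => (h₁ i).ne'
  have hratio : ∀ i j, (m₁ j / m₁ i : ℂ) ≠ 0 := fun i j =>
    div_ne_zero (Complex.ofReal_ne_zero.mpr (hm₁ _)) (Complex.ofReal_ne_zero.mpr (hm₁ _))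
  let G : ℕ → (ℕ → ℂ) → ℕ → ℂ := fun i w j => (m₁ (i + k) / m₁ i : ℂ)⁻¹ *
    (f i j + ∑ l ∈ Finset.range (j + 1), a l * (momentD m₂)^[p] w (j - l))
  let ψ : ℕ → ℕ → ℂ := fun i n => (m₁ i / m₁ 0 : ℂ)⁻¹ * φ i n
  refine (existsUnique_congr fun u => and_congr ?_ ?_).mp (existsUnique_lagRec hk ψ G)
  · simp only [funext_iff, G, eq_inv_mul_iff_mul_eq₀ (hratio _ _), momentDt_iterate_apply m₁ hm₁,
      mulZ, momentDz_iterate_apply, sub_eq_iff_eq_add]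
  · simp only [funext_iff, ψ, eq_inv_mul_iff_mul_eq₀ (hratio _ _), momentDt_iterate_apply m₁ hm₁,
      zero_add]

theorem exists_unique_formal_solution_Cauchy
    (m₁ m₂ : ℕ → ℝ) (h₁ : ∀ p, 0 < m₁ p) (h₂ : ∀ p, 0 < m₂ p)
    (a : ℕ → ℂ) (ha : a 0 ≠ 0)
    (k p : ℕ) (hk : 1 ≤ k) (hkp : k < p)
    (f : ℕ → ℕ → ℂ) (φ : ℕ → ℕ → ℂ) :
    ∃! u : ℕ → ℕ → ℂ,
      (∀ i j, ((momentDt m₁)^[k] u) i j - mulZ a ((momentDz m₂)^[p] u) i j = f i j) ∧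
      (∀ j, j < k → ∀ n, ((momentDt m₁)^[j] u) 0 n = φ j n) :=
  exists_unique_formal_solution_Cauchy_general m₁ m₂ h₁ a k p hk f φ
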